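/- Let m, p ≥ 1, let F₁, …, F_m : [−π, π] → ℂ^p and G₁, …, G_m : [−π, π] → ℂ be measurable with G_i(ω) ≠ 0 for almost every ω and each i, and let k₁, …, k_m > 0. Assume the functions ω ↦ |F_i(ω)|₂²/|G_i(ω)|², ω ↦ |G_i(ω)|², and ω ↦ |F_i(ω)|₂ are integrable for each i. Then (∑_{i=1}^m (1/2π) ∫_{−π}^{π} |F_i(ω)|₂²/|G_i(ω)|² dω) · (∑_{i=1}^m k_i² (1/2π) ∫_{−π}^{π} |G_i(ω)|² dω) ≥ ((1/2π) ∫_{−π}^{π} ∑_{i=1}^m k_i |F_i(ω)|₂ dω)². (Lower bound on the mean squared error of the diagonal-pre-filter zero-forcing mechanism for a MIMO filter F = [F₁, …, F_m].) -/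

import Mathlib

/-!
On each channel, `‖F i‖ = (‖F i‖ / ‖G i‖) * ‖G i‖` almost everywhere, so the Cauchy–Schwarz
inequality in `L²` gives `(∫ ‖F i‖)² ≤ (∫ ‖F i‖² / ‖G i‖²) (∫ ‖G i‖²)`. The discrete
Cauchy–Schwarz inequality then combines the channels with the weights `k i`, and the
normalisation `1 / (2π)` appears squared on both sides.
-/

open MeasureTheory Real

noncomputable instance (ι : Type*) : MeasurableSpace (EuclideanSpace ℂ ι) := MeasurableSpace.comap WithLp.ofLp MeasurableSpace.pi

section CauchySchwarz

variable {α : Type*} [MeasurableSpace α] {μ : Measure α}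

theorem memLp_two_of_nonneg_of_integrable_sq {f : α → ℝ} (hf₀ : 0 ≤ f)
    (hf : Integrable (fun x => f x ^ 2) μ) : MemLp f 2 μ := by
  have hf_eq : f = fun x => √(f x ^ 2) := funext fun x => (sqrt_sq (hf₀ x)).symm
  have hmeas : AEStronglyMeasurable f μ := by
    rw [hf_eq]
    exact continuous_sqrt.comp_aestronglyMeasurable hf.aestronglyMeasurable
  exact (memLp_two_iff_integrable_sq hmeas).2 hf

theorem sq_integral_mul_le_integral_sq_mul_integral_sq {f g : α → ℝ} (hf₀ : 0 ≤ f)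
    (hg₀ : 0 ≤ g) (hf : Integrable (fun x => f x ^ 2) μ) (hg : Integrable (fun x => g x ^ 2) μ) :
    (∫ x, f x * g x ∂μ) ^ 2 ≤ (∫ x, f x ^ 2 ∂μ) * ∫ x, g x ^ 2 ∂μ := by
  have hofReal : ENNReal.ofReal 2 = 2 := ENNReal.ofReal_ofNat 2
  have holder := integral_mul_le_Lp_mul_Lq_of_nonneg HolderConjugate.two_two
    (Filter.Eventually.of_forall hf₀) (Filter.Eventually.of_forall hg₀)
    (hofReal ▸ memLp_two_of_nonneg_of_integrable_sq hf₀ hf)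
    (hofReal ▸ memLp_two_of_nonneg_of_integrable_sq hg₀ hg)
  simp only [rpow_two, ← sqrt_eq_rpow] at holder
  calc (∫ x, f x * g x ∂μ) ^ 2
      ≤ (√(∫ x, f x ^ 2 ∂μ) * √(∫ x, g x ^ 2 ∂μ)) ^ 2 :=
        pow_le_pow_left₀ (integral_nonneg fun x => mul_nonneg (hf₀ x) (hg₀ x)) holder 2
    _ = (∫ x, f x ^ 2 ∂μ) * ∫ x, g x ^ 2 ∂μ := by
        rw [mul_pow, sq_sqrt (integral_nonneg fun x => sq_nonneg _),
          sq_sqrt (integral_nonneg fun x => sq_nonneg _)]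

end CauchySchwarz

section Channel

variable {α E F : Type*} [MeasurableSpace α] {μ : Measure α}
  [NormedAddCommGroup E] [NormedAddCommGroup F] {u : α → E} {v : α → F}

theorem norm_ae_eq_norm_div_mul_norm (hv : ∀ᵐ x ∂μ, v x ≠ 0) :
    (fun x => ‖u x‖) =ᵐ[μ] fun x => ‖u x‖ / ‖v x‖ * ‖v x‖ := by
  filter_upwards [hv] with x hx
  exact (div_mul_cancel₀ _ (norm_ne_zero_iff.2 hx)).symm

theorem integrable_norm_of_integrable_sq_div (hv : ∀ᵐ x ∂μ, v x ≠ 0)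
    (huv : Integrable (fun x => ‖u x‖ ^ 2 / ‖v x‖ ^ 2) μ)
    (hv2 : Integrable (fun x => ‖v x‖ ^ 2) μ) :
    Integrable (fun x => ‖u x‖) μ := by
  have huv' : Integrable (fun x => (‖u x‖ / ‖v x‖) ^ 2) μ := by simpa only [div_pow] using huv
  refine Integrable.congr ?_ (norm_ae_eq_norm_div_mul_norm hv).symm
  exact (memLp_two_of_nonneg_of_integrable_sq (fun x => by positivity) huv').integrable_mul
    (memLp_two_of_nonneg_of_integrable_sq (fun x => norm_nonneg _) hv2)

theorem sq_integral_norm_le (hv : ∀ᵐ x ∂μ, v x ≠ 0)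
    (huv : Integrable (fun x => ‖u x‖ ^ 2 / ‖v x‖ ^ 2) μ)
    (hv2 : Integrable (fun x => ‖v x‖ ^ 2) μ) :
    (∫ x, ‖u x‖ ∂μ) ^ 2 ≤ (∫ x, ‖u x‖ ^ 2 / ‖v x‖ ^ 2 ∂μ) * ∫ x, ‖v x‖ ^ 2 ∂μ := by
  have huv' : Integrable (fun x => (‖u x‖ / ‖v x‖) ^ 2) μ := by simpa only [div_pow] using huv
  rw [integral_congr_ae (norm_ae_eq_norm_div_mul_norm hv)]
  simpa only [div_pow] using sq_integral_mul_le_integral_sq_mul_integral_sq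
    (fun x => by positivity) (fun x => norm_nonneg _) huv' hv2

end Channel

theorem sq_integral_sum_mul_norm_le {α ι E F : Type*} [MeasurableSpace α] {μ : Measure α}
    [NormedAddCommGroup E] [NormedAddCommGroup F] (s : Finset ι) (k : ι → ℝ)
    {u : ι → α → E} {v : ι → α → F} (hv : ∀ i, ∀ᵐ x ∂μ, v i x ≠ 0)
    (huv : ∀ i, Integrable (fun x => ‖u i x‖ ^ 2 / ‖v i x‖ ^ 2) μ)
    (hv2 : ∀ i, Integrable (fun x => ‖v i x‖ ^ 2) μ) :
    (∫ x, ∑ i ∈ s, k i * ‖u i x‖ ∂μ) ^ 2 ≤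
      (∑ i ∈ s, ∫ x, ‖u i x‖ ^ 2 / ‖v i x‖ ^ 2 ∂μ) * ∑ i ∈ s, k i ^ 2 * ∫ x, ‖v i x‖ ^ 2 ∂μ := by
  rw [integral_finsetSum s fun i _ =>
    (integrable_norm_of_integrable_sq_div (hv i) (huv i) (hv2 i)).const_mul (k i)]
  simp only [integral_const_mul]
  refine Finset.sum_sq_le_sum_mul_sum_of_sq_le_mul s
    (fun i _ => integral_nonneg fun x => by positivity)
    (fun i _ => mul_nonneg (sq_nonneg _) (integral_nonneg fun x => by positivity))
    fun i _ => ?_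
  calc (k i * ∫ x, ‖u i x‖ ∂μ) ^ 2
      = k i ^ 2 * (∫ x, ‖u i x‖ ∂μ) ^ 2 := mul_pow _ _ _
    _ ≤ k i ^ 2 * ((∫ x, ‖u i x‖ ^ 2 / ‖v i x‖ ^ 2 ∂μ) * ∫ x, ‖v i x‖ ^ 2 ∂μ) := by
        gcongr
        exact sq_integral_norm_le (hv i) (huv i) (hv2 i)
    _ = _ := by ring

theorem zfe_mimo_diagonal_lower_bound_general (m p : ℕ)
    (F : Fin m → ℝ → EuclideanSpace ℂ (Fin p)) (G : Fin m → ℝ → ℂ)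
    (hGne : ∀ i, ∀ᵐ ω ∂(volume.restrict (Set.Icc (-π) π)), G i ω ≠ 0)
    (k : Fin m → ℝ)
    (hFG : ∀ i, IntegrableOn (fun ω => ‖F i ω‖ ^ 2 / ‖G i ω‖ ^ 2) (Set.Icc (-π) π))
    (hG2 : ∀ i, IntegrableOn (fun ω => ‖G i ω‖ ^ 2) (Set.Icc (-π) π)) :
    (∑ i, (1 / (2 * π)) * ∫ ω in Set.Icc (-π) π, ‖F i ω‖ ^ 2 / ‖G i ω‖ ^ 2) *
        (∑ i, k i ^ 2 * ((1 / (2 * π)) * ∫ ω in Set.Icc (-π) π, ‖G i ω‖ ^ 2)) ≥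
      ((1 / (2 * π)) * ∫ ω in Set.Icc (-π) π, ∑ i, k i * ‖F i ω‖) ^ 2 := by
  have hbound := sq_integral_sum_mul_norm_le Finset.univ k hGne hFG hG2
  simp only [mul_left_comm (k _ ^ 2), ← Finset.mul_sum]
  calc ((1 / (2 * π)) * ∫ ω in Set.Icc (-π) π, ∑ i, k i * ‖F i ω‖) ^ 2
      = (1 / (2 * π)) ^ 2 * (∫ ω in Set.Icc (-π) π, ∑ i, k i * ‖F i ω‖) ^ 2 := mul_pow _ _ _
    _ ≤ (1 / (2 * π)) ^ 2 * ((∑ i, ∫ ω in Set.Icc (-π) π, ‖F i ω‖ ^ 2 / ‖G i ω‖ ^ 2) *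
          ∑ i, k i ^ 2 * ∫ ω in Set.Icc (-π) π, ‖G i ω‖ ^ 2) := by gcongr
    _ = _ := by ring

theorem zfe_mimo_diagonal_lower_bound (m p : ℕ) (hm : 1 ≤ m) (hp : 1 ≤ p)
    (F : Fin m → ℝ → EuclideanSpace ℂ (Fin p)) (G : Fin m → ℝ → ℂ)
    (hF : ∀ i, Measurable (F i)) (hG : ∀ i, Measurable (G i))
    (hGne : ∀ i, ∀ᵐ ω ∂(volume.restrict (Set.Icc (-π) π)), G i ω ≠ 0)
    (k : Fin m → ℝ) (hk : ∀ i, 0 < k i)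
    (hFG : ∀ i, IntegrableOn (fun ω => ‖F i ω‖ ^ 2 / ‖G i ω‖ ^ 2) (Set.Icc (-π) π))
    (hG2 : ∀ i, IntegrableOn (fun ω => ‖G i ω‖ ^ 2) (Set.Icc (-π) π))
    (hFn : ∀ i, IntegrableOn (fun ω => ‖F i ω‖) (Set.Icc (-π) π)) :
    (∑ i, (1 / (2 * π)) * ∫ ω in Set.Icc (-π) π, ‖F i ω‖ ^ 2 / ‖G i ω‖ ^ 2) *
        (∑ i, k i ^ 2 * ((1 / (2 * π)) * ∫ ω in Set.Icc (-π) π, ‖G i ω‖ ^ 2)) ≥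
      ((1 / (2 * π)) * ∫ ω in Set.Icc (-π) π, ∑ i, k i * ‖F i ω‖) ^ 2 :=
  zfe_mimo_diagonal_lower_bound_general m p F G hGne k hFG hG2
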